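/- arXiv:0903.1256 — 3 statements merged into one kernel-verified Lean document; each statement's English description precedes it below -/
import Mathlib

section
/- Let V be a nonzero finite-dimensional real vector space, B a symmetric bilinear form on V of signature (1, dim V − 1), and C ⊆ V a closed salient convex cone that spans V and satisfies B(x, y) ≥ 0 for all x, y ∈ C. Let q > 0 and let T : V → V be a linear automorphism with T(C) = C and B(T x, T y) = q² · B(x, y) for all x, y ∈ V. If there exists a nonzero M ∈ C with T M = q · M, then every complex eigenvalue of T has modulus q. (This is the linear-algebra content of Lemma 2.4 of the paper, with V the space of Weil divisor classes of a normal projective surface, B the Mumford intersection form, C the nef cone, and T the pullback by an endomorphism of degree q².) -/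
/-- A convex cone: closed under addition and multiplication by positive real scalars. -/
def IsConvexCone {V : Type*} [AddCommGroup V] [Module ℝ V] (C : Set V) : Prop :=
  (∀ x ∈ C, ∀ y ∈ C, x + y ∈ C) ∧ ∀ (t : ℝ), 0 < t → ∀ x ∈ C, t • x ∈ C

/-- Salient: `C ∩ (−C) ⊆ {0}`. -/
def IsSalient {V : Type*} [AddCommGroup V] [Module ℝ V] (C : Set V) : Prop :=
  ∀ x ∈ C, -x ∈ C → x = 0

/-- A bilinear form has signature `(1, dim V − 1)`: there is an orthogonal basis with
exactly one basis vector of positive self-pairing, all others negative. -/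
def HasSignatureOneRest {V : Type*} [AddCommGroup V] [Module ℝ V]
    (B : V →ₗ[ℝ] V →ₗ[ℝ] ℝ) : Prop :=
  ∃ (n : ℕ) (b : Module.Basis (Fin n) ℝ V) (i₀ : Fin n),
    (∀ i j, i ≠ j → B (b i) (b j) = 0) ∧
    0 < B (b i₀) (b i₀) ∧ ∀ i, i ≠ i₀ → B (b i) (b i) < 0

/-!
Extend `B` complex-bilinearly and let `v` be a complex eigenvector of `T` for `μ`. Since `T`
multiplies `B` by `q²`, two eigenvectors with eigenvalues `α, β` are `B`-orthogonal unless
`αβ = q²`. If `|μ| ≠ q`, this makes `v` orthogonal to `v`, to `v̄` and to `M`, so the real and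
imaginary parts of `v` are isotropic and orthogonal to `M`. As `B(M, M) ≥ 0` and `B` is negative
definite on a hyperplane, such vectors lie on the line `ℝ M`; hence `v ∈ ℂ M`, and `μ = q`.
-/

open Matrix Polynomial Complex

section Similitude

variable {n R : Type*} [Fintype n] [CommRing R]

theorem Matrix.mulVec_dotProduct_mulVec_mulVec (A G : Matrix n n R) (u w : n → R) :
    (A *ᵥ u) ⬝ᵥ (G *ᵥ (A *ᵥ w)) = u ⬝ᵥ ((Aᵀ * G * A) *ᵥ w) := by
  rw [← mulVec_mulVec, ← mulVec_mulVec, dotProduct_mulVec u, vecMul_transpose]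

theorem Matrix.dotProduct_mulVec_eq_zero_of_mulVec_eq_smul [IsDomain R] {A G : Matrix n n R}
    {c α β : R} {u w : n → R} (hA : Aᵀ * G * A = c • G) (hu : A *ᵥ u = α • u)
    (hw : A *ᵥ w = β • w) (hαβ : α * β ≠ c) : u ⬝ᵥ (G *ᵥ w) = 0 := by
  have h := A.mulVec_dotProduct_mulVec_mulVec G u w
  rw [hu, hw, hA, mulVec_smul, smul_mulVec, smul_dotProduct, dotProduct_smul, dotProduct_smul,
    smul_smul, smul_eq_mul, smul_eq_mul, ← sub_eq_zero, ← sub_mul] at h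
  exact (mul_eq_zero.mp h).resolve_left (sub_ne_zero.mpr hαβ)

end Similitude

section Complexification

variable {n : Type*} [Fintype n]

theorem Complex.re_dotProduct_map_ofReal_mulVec (G : Matrix n n ℝ) (u w : n → ℂ) :
    (u ⬝ᵥ (G.map ofReal *ᵥ w)).re
      = (re ∘ u) ⬝ᵥ (G *ᵥ (re ∘ w)) - (im ∘ u) ⬝ᵥ (G *ᵥ (im ∘ w)) := by
  simp [dotProduct, mulVec, Finset.mul_sum, ← Finset.sum_sub_distrib]

theorem Complex.im_dotProduct_map_ofReal_mulVec (G : Matrix n n ℝ) (u w : n → ℂ) :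
    (u ⬝ᵥ (G.map ofReal *ᵥ w)).im
      = (re ∘ u) ⬝ᵥ (G *ᵥ (im ∘ w)) + (im ∘ u) ⬝ᵥ (G *ᵥ (re ∘ w)) := by
  simp [dotProduct, mulVec, Finset.mul_sum, ← Finset.sum_add_distrib]

theorem Matrix.map_ofReal_mulVec_comp_ofReal (A : Matrix n n ℝ) (m : n → ℝ) :
    A.map ofReal *ᵥ (ofReal ∘ m) = ofReal ∘ (A *ᵥ m) :=
  funext fun i => (RingHom.map_mulVec ofRealHom A m i).symm

theorem Matrix.map_ofReal_mulVec_star {A : Matrix n n ℝ} {μ : ℂ} {v : n → ℂ}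
    (hv : A.map ofReal *ᵥ v = μ • v) : A.map ofReal *ᵥ star v = star μ • star v := by
  funext i
  simpa [mulVec, dotProduct] using congrArg star (congrFun hv i)

theorem Matrix.exists_mulVec_eq_smul_of_aeval_charpoly_eq_zero [DecidableEq n]
    (A : Matrix n n ℝ) {μ : ℂ} (hμ : aeval μ A.charpoly = 0) :
    ∃ v : n → ℂ, v ≠ 0 ∧ A.map ofReal *ᵥ v = μ • v := by
  have hroot : Module.End.HasEigenvalue (toLin' (A.map ofRealHom)) μ := by
    rw [Module.End.hasEigenvalue_iff_isRoot_charpoly, charpoly_toLin', charpoly_map, IsRoot]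
    exact (eval_map_algebraMap _ _).trans hμ
  obtain ⟨v, hv⟩ := hroot.exists_hasEigenvector
  exact ⟨v, hv.2, hv.apply_eq_smul⟩

end Complexification

section Lorentzian

variable {n : Type*} [Fintype n] [DecidableEq n] {d : n → ℝ} {i₀ : n}

theorem Matrix.dotProduct_diagonal_mulVec_comm (x y : n → ℝ) :
    x ⬝ᵥ (diagonal d *ᵥ y) = y ⬝ᵥ (diagonal d *ᵥ x) := by
  rw [dotProduct_mulVec, ← mulVec_transpose, diagonal_transpose, dotProduct_comm]

theorem Matrix.eq_zero_of_dotProduct_diagonal_mulVec_nonneg (hd : ∀ i ≠ i₀, d i < 0)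
    {z : n → ℝ} (hz : z i₀ = 0) (hzz : 0 ≤ z ⬝ᵥ (diagonal d *ᵥ z)) : z = 0 := by
  have hterm : ∀ i ∈ Finset.univ, z i * (d i * z i) ≤ 0 := by
    intro i _
    rcases eq_or_ne i i₀ with rfl | hi
    · simp [hz]
    · nlinarith [hd i hi, mul_self_nonneg (z i)]
  simp only [dotProduct, mulVec_diagonal] at hzz
  have hzero := (Finset.sum_eq_zero_iff_of_nonpos hterm).mp
    (le_antisymm (Finset.sum_nonpos hterm) hzz)
  funext i
  rcases eq_or_ne i i₀ with rfl | hi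
  · exact hz
  · simpa [(hd i hi).ne] using hzero i (Finset.mem_univ i)

theorem Matrix.exists_eq_smul_of_dotProduct_diagonal_mulVec_eq_zero (hd : ∀ i ≠ i₀, d i < 0)
    {m x : n → ℝ} (hm0 : m ≠ 0) (hmm : 0 ≤ m ⬝ᵥ (diagonal d *ᵥ m))
    (hxx : 0 ≤ x ⬝ᵥ (diagonal d *ᵥ x)) (hmx : m ⬝ᵥ (diagonal d *ᵥ x) = 0) :
    ∃ c : ℝ, x = c • m := by
  have hmi₀ : m i₀ ≠ 0 := fun h => hm0 (eq_zero_of_dotProduct_diagonal_mulVec_nonneg hd h hmm)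
  refine ⟨x i₀ / m i₀, sub_eq_zero.mp (eq_zero_of_dotProduct_diagonal_mulVec_nonneg hd ?_ ?_)⟩
  · simp [div_mul_cancel₀ _ hmi₀]
  · set c := x i₀ / m i₀
    have hxm : x ⬝ᵥ (diagonal d *ᵥ m) = 0 := by rwa [dotProduct_diagonal_mulVec_comm]
    have hexpand : (x - c • m) ⬝ᵥ (diagonal d *ᵥ (x - c • m)) =
        x ⬝ᵥ (diagonal d *ᵥ x) + c ^ 2 * m ⬝ᵥ (diagonal d *ᵥ m) := by
      simp only [mulVec_sub, mulVec_smul, sub_dotProduct, dotProduct_sub, smul_dotProduct,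
        dotProduct_smul, hmx, hxm, smul_eq_mul]
      ring
    rw [hexpand]
    exact add_nonneg hxx (mul_nonneg (sq_nonneg c) hmm)

theorem Matrix.exists_eq_smul_ofReal_of_dotProduct_map_ofReal_eq_zero (hd : ∀ i ≠ i₀, d i < 0)
    {m : n → ℝ} (hm0 : m ≠ 0) (hmm : 0 ≤ m ⬝ᵥ (diagonal d *ᵥ m)) {v : n → ℂ}
    (hvv : v ⬝ᵥ ((diagonal d).map ofReal *ᵥ v) = 0)
    (hvv' : v ⬝ᵥ ((diagonal d).map ofReal *ᵥ star v) = 0)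
    (hmv : (ofReal ∘ m) ⬝ᵥ ((diagonal d).map ofReal *ᵥ v) = 0) :
    ∃ s : ℂ, v = s • (ofReal ∘ m) := by
  have hre_star : re ∘ star v = re ∘ v := funext fun i => conj_re (v i)
  have him_star : im ∘ star v = -(im ∘ v) := funext fun i => conj_im (v i)
  have hre_m : re ∘ ofReal ∘ m = m := funext fun i => ofReal_re (m i)
  have him_m : im ∘ ofReal ∘ m = 0 := funext fun i => ofReal_im (m i)
  have h₁ := congrArg re hvv
  have h₂ := congrArg re hvv'
  have h₃ := congrArg re hmv
  have h₄ := congrArg im hmv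
  rw [re_dotProduct_map_ofReal_mulVec] at h₁ h₂ h₃
  rw [im_dotProduct_map_ofReal_mulVec] at h₄
  simp only [hre_star, him_star, hre_m, him_m, mulVec_neg, dotProduct_neg, zero_dotProduct,
    zero_re, zero_im, sub_zero, add_zero] at h₁ h₂ h₃ h₄
  obtain ⟨a, ha⟩ := exists_eq_smul_of_dotProduct_diagonal_mulVec_eq_zero hd hm0 hmm
    (by linarith) h₃
  obtain ⟨b, hb⟩ := exists_eq_smul_of_dotProduct_diagonal_mulVec_eq_zero hd hm0 hmm
    (by linarith) h₄
  refine ⟨a + b * I, funext fun i => Complex.ext ?_ ?_⟩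
  · simpa using congrFun ha i
  · simpa using congrFun hb i

theorem Matrix.norm_eq_of_aeval_charpoly_eq_zero (hd : ∀ i ≠ i₀, d i < 0) {A : Matrix n n ℝ}
    {q : ℝ} (hq : 0 < q) (hA : Aᵀ * diagonal d * A = q ^ 2 • diagonal d) {m : n → ℝ}
    (hm0 : m ≠ 0) (hmm : 0 ≤ m ⬝ᵥ (diagonal d *ᵥ m)) (hAm : A *ᵥ m = q • m) {μ : ℂ}
    (hμ : aeval μ A.charpoly = 0) : ‖μ‖ = q := by
  by_contra hμq
  obtain ⟨v, hv0, hv⟩ := A.exists_mulVec_eq_smul_of_aeval_charpoly_eq_zero hμ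
  have hAc : (A.map ofReal)ᵀ * (diagonal d).map ofReal * A.map ofReal
      = (q : ℂ) ^ 2 • (diagonal d).map ofReal := by
    have := congrArg (RingHom.mapMatrix ofRealHom) hA
    simp only [map_mul, RingHom.mapMatrix_apply, transpose_map] at this
    exact this.trans (by ext i j; by_cases h : i = j <;> simp [h])
  have hAm' : A.map ofReal *ᵥ (ofReal ∘ m) = (q : ℂ) • (ofReal ∘ m) := by
    rw [map_ofReal_mulVec_comp_ofReal, hAm]; funext i; simp
  have hμμ : μ * μ ≠ (q : ℂ) ^ 2 := fun h => hμq <| by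
    have := congrArg norm h
    simp only [norm_mul, norm_pow, norm_real, Real.norm_of_nonneg hq.le] at this
    nlinarith [norm_nonneg μ]
  have hμμ' : μ * star μ ≠ (q : ℂ) ^ 2 := fun h => hμq <| by
    rw [star_def, mul_conj'] at h
    have h' : ‖μ‖ ^ 2 = q ^ 2 := by exact_mod_cast h
    nlinarith [norm_nonneg μ]
  have hqμ : (q : ℂ) * μ ≠ (q : ℂ) ^ 2 := fun h => hμq <| by
    rw [sq, mul_right_inj' (ofReal_ne_zero.mpr hq.ne')] at h
    rw [h, norm_real, Real.norm_of_nonneg hq.le]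
  obtain ⟨s, hvs⟩ := exists_eq_smul_ofReal_of_dotProduct_map_ofReal_eq_zero hd hm0 hmm
    (dotProduct_mulVec_eq_zero_of_mulVec_eq_smul hAc hv hv hμμ)
    (dotProduct_mulVec_eq_zero_of_mulVec_eq_smul hAc hv (map_ofReal_mulVec_star hv) hμμ')
    (dotProduct_mulVec_eq_zero_of_mulVec_eq_smul hAc hAm' hv hqμ)
  have hqv : A.map ofReal *ᵥ v = (q : ℂ) • v := by rw [hvs, mulVec_smul, hAm', smul_comm]
  have hμ_eq : μ = q := smul_left_injective ℂ hv0 (hv.symm.trans hqv)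
  exact hμq (by rw [hμ_eq, norm_real, Real.norm_of_nonneg hq.le])

end Lorentzian

theorem LinearMap.BilinForm.toMatrix_eq_diagonal {ι R V : Type*} [Fintype ι] [DecidableEq ι]
    [CommRing R] [AddCommGroup V] [Module R V] {B : LinearMap.BilinForm R V}
    (b : Module.Basis ι R V) (horth : ∀ i j, i ≠ j → B (b i) (b j) = 0) :
    LinearMap.BilinForm.toMatrix b B = diagonal fun i => B (b i) (b i) := by
  ext i j
  rcases eq_or_ne i j with rfl | hij
  · simp
  · simp [hij, horth i j hij]

theorem stmt_0_general {V : Type*} [AddCommGroup V] [Module ℝ V] [FiniteDimensional ℝ V]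
    (B : V →ₗ[ℝ] V →ₗ[ℝ] ℝ)
    (hBsig : HasSignatureOneRest B)
    (C : Set V)
    (hBC : ∀ x ∈ C, ∀ y ∈ C, 0 ≤ B x y)
    (q : ℝ) (hq : 0 < q)
    (T : V ≃ₗ[ℝ] V)
    (hTB : ∀ x y, B (T x) (T y) = q ^ 2 * B x y)
    (M : V) (hMC : M ∈ C) (hM0 : M ≠ 0) (hTM : T M = q • M) :
    ∀ μ : ℂ, (Polynomial.aeval μ) (LinearMap.charpoly (T : V →ₗ[ℝ] V)) = 0 →
      ‖μ‖ = q := by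
  intro μ hμ
  obtain ⟨n, b, i₀, horth, -, hneg⟩ := hBsig
  have hG := LinearMap.BilinForm.toMatrix_eq_diagonal b horth
  have hBT : LinearMap.BilinForm.comp B (T : V →ₗ[ℝ] V) T = q ^ 2 • B := by
    ext x y
    simp [hTB]
  refine norm_eq_of_aeval_charpoly_eq_zero hneg hq (A := LinearMap.toMatrix b b T)
    (m := b.repr M) ?_ ?_ ?_ ?_ ?_
  · rw [← hG, ← LinearMap.BilinForm.toMatrix_comp, hBT, map_smul]
  · simpa using hM0
  · rw [← hG, ← LinearMap.BilinForm.apply_eq_dotProduct_toMatrix_mulVec]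
    exact hBC M hMC M hMC
  · rw [LinearMap.toMatrix_mulVec_repr, LinearEquiv.coe_coe, hTM, map_smul, Finsupp.coe_smul]
  · rwa [LinearMap.charpoly_toMatrix]

theorem stmt_0 {V : Type*} [AddCommGroup V] [Module ℝ V] [FiniteDimensional ℝ V]
    [Nontrivial V] [TopologicalSpace V] [IsTopologicalAddGroup V] [ContinuousSMul ℝ V]
    (B : V →ₗ[ℝ] V →ₗ[ℝ] ℝ) (hBsymm : ∀ x y, B x y = B y x)
    (hBsig : HasSignatureOneRest B)
    (C : Set V) (hCcone : IsConvexCone C) (hCclosed : IsClosed C)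
    (hCsal : IsSalient C) (hCspan : Submodule.span ℝ C = ⊤)
    (hBC : ∀ x ∈ C, ∀ y ∈ C, 0 ≤ B x y)
    (q : ℝ) (hq : 0 < q)
    (T : V ≃ₗ[ℝ] V) (hTC : ⇑T '' C = C)
    (hTB : ∀ x y, B (T x) (T y) = q ^ 2 * B x y)
    (M : V) (hMC : M ∈ C) (hM0 : M ≠ 0) (hTM : T M = q • M) :
    ∀ μ : ℂ, (Polynomial.aeval μ) (LinearMap.charpoly (T : V →ₗ[ℝ] V)) = 0 →
      ‖μ‖ = q :=
  stmt_0_general B hBsig C hBC q hq T hTB M hMC hM0 hTM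
end

section
/- Let V be a real vector space with 1 ≤ dim V ≤ 2, let C ⊆ V be a closed salient convex cone whose linear span equals V, and let T : V → V be a linear automorphism with T(C) = C such that every complex eigenvalue of T has modulus q, for some real q > 0. Then T ∘ T = q² · id_V. (This is the abstract content of Lemma 2.3(4) of the paper: if the Picard number is at most 2 and every eigenvalue of f* on N¹(X) has modulus q, then (f²)* = q²·id.) -/
/-!
Over `ℂ` the characteristic polynomial of `T` has at most two roots `μ, ν`, both of modulus `q`,
with `μν` real; hence `ν² = conj μ²`, and `A = T²` is annihilated by the real quadratic
`(X - λ)(X - conj λ)`, where `λ = μ²`. Then `Aⁿ` is annihilated by `(X - λⁿ)(X - conj λⁿ)`, so for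
`v ≠ 0` in `C` the vector `A²ⁿ v + |λ|²ⁿ v = 2 Re(λⁿ) Aⁿ v` lies in `C`, and salience forces
`Re λⁿ ≥ 0` for every `n ≥ 1`. This pins `λ` to the positive real axis: `λ = q²`. Finally
`A = q² (1 + N)` with `N² = 0`; since `(1 + N)ⁿ v = v + n N v ∈ C`, closedness gives `N v ∈ C`,
the same argument for `(1 + N)⁻¹ = 1 - N` gives `-N v ∈ C`, and `N` vanishes on the spanning cone.
-/

open Polynomial ComplexConjugate Filter Topology Set Real

noncomputable def realQuadratic (z : ℂ) : ℝ[X] := X ^ 2 - C (2 * z.re) * X + C (‖z‖ ^ 2)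

lemma map_realQuadratic (z : ℂ) :
    (realQuadratic z).map (algebraMap ℝ ℂ) = (X - C z) * (X - C (conj z)) := by
  have hre : ((2 * z.re : ℝ) : ℂ) = z + conj z := (Complex.add_conj z).symm
  have hnorm : ((‖z‖ ^ 2 : ℝ) : ℂ) = z * conj z := by
    rw [Complex.mul_conj, Complex.normSq_eq_norm_sq]
  simp only [realQuadratic, Polynomial.map_add, Polynomial.map_sub, Polynomial.map_mul,
    Polynomial.map_pow, map_X, map_C, Complex.coe_algebraMap]
  rw [hre, hnorm, C_add, C_mul]
  ring

lemma aeval_pow_realQuadratic_eq_zero {A : Type*} [Ring A] [Algebra ℝ A] {a : A} {p : ℝ[X]}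
    (ha : aeval a p = 0) {z : ℂ} {n : ℕ}
    (hdvd : p.map (algebraMap ℝ ℂ) ∣ (X ^ n - C z) * (X ^ n - C (conj z))) :
    aeval (a ^ n) (realQuadratic z) = 0 := by
  obtain ⟨g, hg⟩ : p ∣ (realQuadratic z).comp (X ^ n) := by
    rw [← map_dvd_map' (algebraMap ℝ ℂ), Polynomial.map_comp, map_realQuadratic]
    simpa using hdvd
  rw [← aeval_X_pow (R := ℝ), ← aeval_comp, hg, map_mul, ha, zero_mul]

lemma aeval_pow_realQuadratic_pow {A : Type*} [Ring A] [Algebra ℝ A] {a : A} {z : ℂ}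
    (h : aeval a (realQuadratic z) = 0) (n : ℕ) : aeval (a ^ n) (realQuadratic (z ^ n)) = 0 := by
  refine aeval_pow_realQuadratic_eq_zero h ?_
  rw [map_realQuadratic]
  simp only [map_pow]
  exact mul_dvd_mul (sub_dvd_pow_sub_pow _ _ n) (sub_dvd_pow_sub_pow _ _ n)

lemma realQuadratic_of_re_eq_norm {z : ℂ} (h : z.re = ‖z‖) :
    realQuadratic z = (X - C ‖z‖) ^ 2 := by
  simp only [realQuadratic, h, C_mul, C_pow, C_ofNat]
  ring

lemma Complex.re_pow (z : ℂ) (n : ℕ) : (z ^ n).re = ‖z‖ ^ n * Real.cos (n * z.arg) := by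
  conv_lhs => rw [← norm_mul_cos_add_sin_mul_I z]
  rw [mul_pow, cos_add_sin_mul_I_pow, ← ofReal_pow, re_ofReal_mul, ← ofReal_natCast,
    ← ofReal_mul, ← ofReal_cos, ← ofReal_sin, add_re, ofReal_re, mul_I_re, ofReal_im, neg_zero,
    add_zero]

lemma Real.exists_cos_nat_mul_neg {θ : ℝ} (h0 : 0 < θ) (hπ : θ ≤ π) :
    ∃ n : ℕ, 0 < n ∧ Real.cos (n * θ) < 0 := by
  rcases lt_or_ge (π / 2) θ with hθ | hθ
  · exact ⟨1, one_pos, by simpa using cos_neg_of_pi_div_two_lt_of_lt hθ (by linarith [pi_pos])⟩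
  · refine ⟨⌊π / 2 / θ⌋₊ + 1, Nat.succ_pos _, cos_neg_of_pi_div_two_lt_of_lt ?_ ?_⟩
    · have := Nat.lt_floor_add_one (π / 2 / θ)
      rw [div_lt_iff₀ h0] at this
      push_cast
      linarith
    · have := Nat.floor_le (div_nonneg (by positivity) h0.le : 0 ≤ π / 2 / θ)
      rw [le_div_iff₀ h0] at this
      push_cast
      linarith

lemma Complex.arg_eq_zero_of_forall_re_pow_nonneg {z : ℂ}
    (h : ∀ n : ℕ, 0 < n → 0 ≤ (z ^ n).re) : z.arg = 0 := by
  by_contra harg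
  have hz : z ≠ 0 := by rintro rfl; simp at harg
  obtain ⟨n, hn, hcos⟩ := Real.exists_cos_nat_mul_neg (abs_pos.2 harg)
    (abs_le.2 ⟨(neg_pi_lt_arg z).le, arg_le_pi z⟩)
  have := h n hn
  rw [re_pow, ← Real.cos_abs, abs_mul, Nat.abs_cast] at this
  exact this.not_gt (mul_neg_of_pos_of_neg (by positivity) hcos)

lemma Complex.sq_eq_conj_sq_of_norm_eq {μ ν : ℂ} (hnorm : ‖ν‖ = ‖μ‖) (him : (μ * ν).im = 0) :
    ν ^ 2 = conj (μ ^ 2) := by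
  rcases eq_or_ne μ 0 with rfl | hμ
  · simp_all
  refine mul_left_cancel₀ (pow_ne_zero 2 hμ) ?_
  calc μ ^ 2 * ν ^ 2 = μ * ν * conj (μ * ν) := by rw [conj_eq_iff_im.2 him]; ring
    _ = (‖μ‖ ^ 2) ^ 2 := by rw [mul_conj', norm_mul, hnorm]; push_cast; ring
    _ = μ ^ 2 * conj (μ ^ 2) := by rw [map_pow, ← mul_conj']; ring

lemma one_add_pow_of_sq_eq_zero {R : Type*} [Ring R] {N : R} (hN : N ^ 2 = 0) (n : ℕ) :
    (1 + N) ^ n = 1 + n • N := by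
  induction n with
  | zero => simp
  | succ n ih =>
    rw [pow_succ, ih, succ_nsmul, add_mul, one_mul, mul_add, mul_one, smul_mul_assoc, ← sq, hN,
      smul_zero]
    abel

section Cone

variable {V : Type*} [AddCommGroup V] [Module ℝ V] {C : Set V}

lemma IsSalient.nonneg_of_smul_mem (hsal : IsSalient C) (hC : IsConvexCone C) {x : V}
    (hx : x ∈ C) (hx0 : x ≠ 0) {r : ℝ} (hr : r • x ∈ C) : 0 ≤ r := by
  by_contra! hneg
  have hmem : -(r • x) ∈ C := by simpa using hC.2 (-r) (neg_pos.2 hneg) x hx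
  exact hx0 ((smul_eq_zero.1 (hsal _ hr hmem)).resolve_left hneg.ne)

lemma IsSalient.re_nonneg_of_aeval_realQuadratic (hsal : IsSalient C) (hC : IsConvexCone C)
    {A : Module.End ℝ V} (hAC : MapsTo A C C) {v : V} (hv : v ∈ C) (hv0 : v ≠ 0) {z : ℂ}
    (hz : z ≠ 0) (h : aeval A (realQuadratic z) = 0) : 0 ≤ z.re := by
  have hrel : A (A v) + (‖z‖ ^ 2) • v = (2 * z.re) • A v := by
    have := LinearMap.congr_fun h v
    simp only [realQuadratic, map_add, map_sub, map_mul, aeval_X, aeval_C,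
      LinearMap.add_apply, LinearMap.sub_apply, Module.algebraMap_end_apply,
      LinearMap.zero_apply, sq, Module.End.mul_apply] at this
    linear_combination (norm := module) this
  have hAv : A v ≠ 0 := by
    intro h0
    rw [h0, map_zero, smul_zero, zero_add] at hrel
    exact hv0 ((smul_eq_zero.1 hrel).resolve_left (by positivity))
  have hmem : (2 * z.re) • A v ∈ C :=
    hrel ▸ hC.1 _ (hAC (hAC hv)) _ (hC.2 _ (by positivity) _ hv)
  have := hsal.nonneg_of_smul_mem hC (hAC hv) hAv hmem
  linarith

variable [TopologicalSpace V] [ContinuousAdd V] [ContinuousSMul ℝ V]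

lemma IsConvexCone.mapsTo_of_sq_eq_zero (hC : IsConvexCone C) (hCcl : IsClosed C)
    {N : Module.End ℝ V} (hN : N ^ 2 = 0) (h : MapsTo (⇑(1 + N)) C C) : MapsTo N C C := by
  intro v hv
  have hmem : ∀ n : ℕ, 0 < n → (n : ℝ)⁻¹ • v + N v ∈ C := by
    intro n hn
    have hpow : ((1 + N) ^ n) v ∈ C := by
      rw [Module.End.pow_apply]
      exact h.iterate n hv
    rw [one_add_pow_of_sq_eq_zero hN] at hpow
    convert hC.2 (n : ℝ)⁻¹ (by positivity) _ hpow using 1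
    rw [LinearMap.add_apply, LinearMap.smul_apply, Module.End.one_apply, smul_add,
      ← Nat.cast_smul_eq_nsmul ℝ, smul_smul, inv_mul_cancel₀ (by positivity), one_smul]
  have hlim : Tendsto (fun n : ℕ => (n : ℝ)⁻¹ • v + N v) atTop (𝓝 (N v)) := by
    simpa only [zero_smul, zero_add] using
      ((tendsto_inv_atTop_nhds_zero_nat (𝕜 := ℝ)).smul_const v).add_const (N v)
  exact hCcl.mem_of_tendsto hlim (eventually_atTop.2 ⟨1, fun n hn => hmem n hn⟩)

lemma IsSalient.eq_zero_of_sq_eq_zero (hsal : IsSalient C) (hC : IsConvexCone C)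
    (hCcl : IsClosed C) (hspan : Submodule.span ℝ C = ⊤) {N : Module.End ℝ V} (hN : N ^ 2 = 0)
    (h₁ : MapsTo (⇑(1 + N)) C C) (h₂ : MapsTo (⇑(1 - N)) C C) : N = 0 := by
  have hpos := hC.mapsTo_of_sq_eq_zero hCcl hN h₁
  have hneg := hC.mapsTo_of_sq_eq_zero hCcl (N := -N) (by rw [neg_sq, hN])
    (by rwa [← sub_eq_add_neg])
  exact LinearMap.ext_on hspan fun v hv => hsal _ (hpos hv) (hneg hv)

lemma IsSalient.eq_smul_one_of_sub_sq_eq_zero (hsal : IsSalient C) (hC : IsConvexCone C)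
    (hCcl : IsClosed C) (hspan : Submodule.span ℝ C = ⊤) {A : Module.End ℝ V} (hAC : A '' C = C)
    {r : ℝ} (hr : 0 < r) (h : (A - r • 1) ^ 2 = 0) : A = r • 1 := by
  set N := r⁻¹ • A - 1 with hNdef
  have hA : A = r • (1 + N) := by
    rw [hNdef, add_sub_cancel, smul_smul, mul_inv_cancel₀ hr.ne', one_smul]
  have hN : N ^ 2 = 0 := by
    rw [show N = r⁻¹ • (A - r • 1) by rw [smul_sub, smul_smul, inv_mul_cancel₀ hr.ne', one_smul],
      _root_.smul_pow, h, smul_zero]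
  have h₁ : MapsTo (⇑(1 + N)) C C := fun v hv => by
    rw [hNdef, add_sub_cancel, LinearMap.smul_apply]
    exact hC.2 r⁻¹ (inv_pos.2 hr) _ (hAC.subset (mem_image_of_mem A hv))
  -- `1 - N` inverts `1 + N`, and `1 + N` maps `C` onto `C`.
  have h₂ : MapsTo (⇑(1 - N)) C C := by
    intro v hv
    obtain ⟨u, hu, rfl⟩ : v ∈ A '' C := hAC.symm ▸ hv
    have hinv : (1 - N) * (1 + N) = 1 := by
      rw [mul_add, mul_one, sub_mul, one_mul, ← sq, hN]; abel
    rw [hA, LinearMap.smul_apply, map_smul, ← Module.End.mul_apply, hinv, Module.End.one_apply]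
    exact hC.2 r hr u hu
  rw [hA, hsal.eq_zero_of_sq_eq_zero hC hCcl hspan hN h₁ h₂, add_zero]

theorem IsSalient.eq_norm_smul_one_of_aeval_realQuadratic (hsal : IsSalient C)
    (hC : IsConvexCone C) (hCcl : IsClosed C) (hspan : Submodule.span ℝ C = ⊤)
    {A : Module.End ℝ V} (hAC : A '' C = C)
    {z : ℂ} (hz : z ≠ 0) (h : aeval A (realQuadratic z) = 0) : A = ‖z‖ • 1 := by
  by_cases hV : ∃ v ∈ C, v ≠ 0
  · obtain ⟨v, hv, hv0⟩ := hV
    have hmaps : MapsTo A C C := fun v hv => hAC.subset (mem_image_of_mem A hv)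
    have hre : ∀ n : ℕ, 0 < n → 0 ≤ (z ^ n).re := fun n _ =>
      hsal.re_nonneg_of_aeval_realQuadratic hC
        (by rw [Module.End.coe_pow]; exact hmaps.iterate n) hv hv0
        (pow_ne_zero n hz) (aeval_pow_realQuadratic_pow h n)
    have hzr : z.re = ‖z‖ := Complex.re_eq_norm.2 <| Complex.arg_eq_zero_iff_zero_le.1 <|
      Complex.arg_eq_zero_of_forall_re_pow_nonneg hre
    refine hsal.eq_smul_one_of_sub_sq_eq_zero hC hCcl hspan hAC (norm_pos_iff.2 hz) ?_
    rwa [realQuadratic_of_re_eq_norm hzr, map_pow, map_sub, aeval_X, aeval_C,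
      Algebra.algebraMap_eq_smul_one] at h
  · push Not at hV
    exact LinearMap.ext_on hspan fun v hv => by simp [hV v hv]

end Cone

lemma exists_norm_eq_sq_and_map_dvd {p : ℝ[X]} (hp : p.Monic) (hdeg : p.natDegree ≤ 2) {q : ℝ}
    (hroots : ∀ μ : ℂ, aeval μ p = 0 → ‖μ‖ = q) :
    ∃ z : ℂ, ‖z‖ = q ^ 2 ∧ p.map (algebraMap ℝ ℂ) ∣ (X ^ 2 - C z) * (X ^ 2 - C (conj z)) := by
  set P := p.map (algebraMap ℝ ℂ)
  have hP : (P.roots.map (fun μ => X - C μ)).prod = P :=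
    ((IsAlgClosed.splits P).eq_prod_roots_of_monic (hp.map _)).symm
  have hnorm : ∀ μ ∈ P.roots, ‖μ‖ = q := fun μ hμ =>
    hroots μ (by rw [aeval_def, eval₂_eq_eval_map]; exact (mem_roots (hp.map _).ne_zero).1 hμ)
  have hcard : P.roots.card ≤ 2 := (card_roots' P).trans (by rwa [natDegree_map])
  obtain h0 | h1 | h2 : P.roots.card = 0 ∨ P.roots.card = 1 ∨ P.roots.card = 2 := by omega
  · refine ⟨(q : ℂ) ^ 2, by simp, ?_⟩
    rw [← hP, Multiset.card_eq_zero.1 h0, Multiset.map_zero, Multiset.prod_zero]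
    exact one_dvd _
  · obtain ⟨μ, hμ⟩ := Multiset.card_eq_one.1 h1
    refine ⟨μ ^ 2, by rw [norm_pow, hnorm μ (by simp [hμ])], ?_⟩
    rw [← hP, hμ, Multiset.map_singleton, Multiset.prod_singleton, C_pow]
    exact (sub_dvd_pow_sub_pow X (C μ) 2).mul_right _
  · obtain ⟨μ, ν, hμν⟩ := Multiset.card_eq_two.1 h2
    have hμ : ‖μ‖ = q := hnorm μ (by simp [hμν])
    have hν : ‖ν‖ = q := hnorm ν (by simp [hμν])
    have hreal : (μ * ν).im = 0 := by
      have := (IsAlgClosed.splits P).coeff_zero_eq_prod_roots_of_monic (hp.map _)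
      rw [coeff_map, hμν, (IsAlgClosed.splits P).natDegree_eq_card_roots, h2] at this
      simp only [Complex.coe_algebraMap, Multiset.insert_eq_cons, Multiset.prod_cons,
        Multiset.prod_singleton, even_two, Even.neg_one_pow, one_mul] at this
      rw [← this, Complex.ofReal_im]
    have hsq := Complex.sq_eq_conj_sq_of_norm_eq (hν.trans hμ.symm) hreal
    refine ⟨μ ^ 2, by rw [norm_pow, hμ], ?_⟩
    rw [← hP, hμν, Multiset.insert_eq_cons, Multiset.map_cons, Multiset.map_singleton,
      Multiset.prod_cons, Multiset.prod_singleton, ← hsq, C_pow, C_pow]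
    exact mul_dvd_mul (sub_dvd_pow_sub_pow _ _ 2) (sub_dvd_pow_sub_pow _ _ 2)

theorem stmt_2_general {V : Type*} [AddCommGroup V] [Module ℝ V] [FiniteDimensional ℝ V]
    [TopologicalSpace V] [IsTopologicalAddGroup V] [ContinuousSMul ℝ V]
    (hdim2 : Module.finrank ℝ V ≤ 2)
    (C : Set V) (hCcone : IsConvexCone C) (hCclosed : IsClosed C) (hCsal : IsSalient C)
    (hCspan : Submodule.span ℝ C = ⊤)
    (T : V ≃ₗ[ℝ] V) (hTC : ⇑T '' C = C)
    (q : ℝ) (hq : 0 < q)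
    (hT : ∀ μ : ℂ, (Polynomial.aeval μ) (LinearMap.charpoly (T : V →ₗ[ℝ] V)) = 0 →
      ‖μ‖ = q) :
    ∀ v : V, T (T v) = q ^ 2 • v := by
  set S : Module.End ℝ V := T.toLinearMap with hS
  obtain ⟨z, hz, hdvd⟩ :=
    exists_norm_eq_sq_and_map_dvd S.charpoly_monic (S.charpoly_natDegree.trans_le hdim2) hT
  have hS2 : aeval (S ^ 2) (realQuadratic z) = 0 :=
    aeval_pow_realQuadratic_eq_zero S.aeval_self_charpoly hdvd
  have hS2C : ⇑(S ^ 2) '' C = C := by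
    rw [Module.End.coe_pow, Function.iterate_succ, Function.iterate_one, image_comp, hS,
      LinearEquiv.coe_coe, hTC, hTC]
  have hz0 : z ≠ 0 := norm_ne_zero_iff.1 (hz ▸ (pow_pos hq 2).ne')
  intro v
  simpa [hz, hS, sq] using LinearMap.congr_fun
    (hCsal.eq_norm_smul_one_of_aeval_realQuadratic hCcone hCclosed hCspan hS2C hz0 hS2) v

theorem stmt_2 {V : Type*} [AddCommGroup V] [Module ℝ V] [FiniteDimensional ℝ V]
    [TopologicalSpace V] [IsTopologicalAddGroup V] [ContinuousSMul ℝ V]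
    (hdim1 : 1 ≤ Module.finrank ℝ V) (hdim2 : Module.finrank ℝ V ≤ 2)
    (C : Set V) (hCcone : IsConvexCone C) (hCclosed : IsClosed C) (hCsal : IsSalient C)
    (hCspan : Submodule.span ℝ C = ⊤)
    (T : V ≃ₗ[ℝ] V) (hTC : ⇑T '' C = C)
    (q : ℝ) (hq : 0 < q)
    (hT : ∀ μ : ℂ, (Polynomial.aeval μ) (LinearMap.charpoly (T : V →ₗ[ℝ] V)) = 0 →
      ‖μ‖ = q) :
    ∀ v : V, T (T v) = q ^ 2 • v :=
  stmt_2_general hdim2 C hCcone hCclosed hCsal hCspan T hTC q hq hT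
end

section
/- Let V be a real vector space of finite dimension n ≥ 3, C ⊆ V a salient convex cone, φ₁, …, φ_{n−1} linearly independent linear functionals on V, and A₂, …, A_{n−1} finite subsets of ℝ. Then the number of distinct extremal rays R of C such that φ₁(x) > 0 for every nonzero x ∈ R and such that for each j ∈ {2, …, n−1} there exists a_j ∈ A_j with φ_j(x) = a_j · φ₁(x) for all x ∈ R, is at most 2 · ∏_{j=2}^{n−1} |A_j|. (This is the combinatorial core of the proof of Theorem 1 of the appendix: infinitely many pairwise distinct extremal rays cannot all satisfy ratio conditions with only finitely many possible ratio values, since each tuple of ratios confines the rays to a two-dimensional subspace containing at most two extremal rays.) -/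
/-- An extremal ray of a convex cone `C`. -/
def IsExtremalRay {V : Type*} [AddCommGroup V] [Module ℝ V] (C R : Set V) : Prop :=
  (∃ v, v ∈ C ∧ v ≠ 0 ∧ R = {x | ∃ t : ℝ, 0 ≤ t ∧ x = t • v}) ∧
  R ⊆ C ∧ ∀ x ∈ C, ∀ y ∈ C, x + y ∈ R → x ∈ R ∧ y ∈ R

lemma Set.encard_image_le_two_of_eq_of_lt_of_lt {α β : Type*} [LinearOrder α] {g : α → β}
    {T : Set α} (h : ∀ x ∈ T, ∀ y ∈ T, ∀ z ∈ T, x < y → y < z → g x = g y ∧ g y = g z) :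
    (g '' T).encard ≤ 2 := by
  by_contra! hlt
  obtain ⟨t, htT, ht⟩ := exists_subset_encard_eq (Order.add_one_le_of_lt hlt)
  obtain ⟨a, b, c, hab, hac, hbc, rfl⟩ := encard_eq_three.1 ht
  obtain ⟨x, hx, rfl⟩ := htT (mem_insert a _)
  obtain ⟨y, hy, rfl⟩ := htT (mem_insert_of_mem _ (mem_insert b _))
  obtain ⟨z, hz, rfl⟩ := htT (mem_insert_of_mem _ (mem_insert_of_mem _ rfl))
  rcases lt_trichotomy x y with hxy | hxy | hxy <;>
  rcases lt_trichotomy y z with hyz | hyz | hyz <;>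
  rcases lt_trichotomy x z with hxz | hxz | hxz <;>
  grind

lemma Subspace.finrank_dualCoannihilator_span_range {K V ι : Type*} [Field K] [AddCommGroup V]
    [Module K V] [FiniteDimensional K V] [Fintype ι] {f : ι → Module.Dual K V}
    (hf : LinearIndependent K f) :
    Module.finrank K (Submodule.span K (Set.range f)).dualCoannihilator =
      Module.finrank K V - Fintype.card ι := by
  have := finrank_add_finrank_dualCoannihilator_eq (Submodule.span K (Set.range f))
  rw [finrank_span_eq_card hf] at this
  omega

section Rays

variable {V : Type*} [AddCommGroup V] [Module ℝ V]

def ray (v : V) : Set V := {x | ∃ t : ℝ, 0 ≤ t ∧ x = t • v}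

lemma self_mem_ray (v : V) : v ∈ ray v := ⟨1, zero_le_one, (one_smul ℝ v).symm⟩

lemma ray_smul {c : ℝ} (hc : 0 < c) (v : V) : ray (c • v) = ray v := by
  ext x
  constructor
  · rintro ⟨t, ht, rfl⟩
    exact ⟨t * c, by positivity, smul_smul t c v⟩
  · rintro ⟨t, ht, rfl⟩
    exact ⟨t / c, by positivity, by rw [smul_smul, div_mul_cancel₀ t hc.ne']⟩

lemma ray_eq_of_mem {x v : V} (hx : x ∈ ray v) (hx0 : x ≠ 0) : ray x = ray v := by
  obtain ⟨t, ht, rfl⟩ := hx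
  exact ray_smul (ht.lt_of_ne (by rintro rfl; simp at hx0)) v

variable {C : Set V}

lemma IsExtremalRay.eq_ray_of_smul_add_smul_mem {R : Set V} (hR : IsExtremalRay C R)
    (hC : IsConvexCone C) {x z : V} (hx : x ∈ C) (hz : z ∈ C) (hx0 : x ≠ 0) {l m : ℝ}
    (hl : 0 < l) (hm : 0 < m) (h : l • x + m • z ∈ R) : ray x = R := by
  obtain ⟨⟨v, -, -, rfl⟩, -, hsplit⟩ := hR
  have hlx : l • x ∈ ray v := (hsplit _ (hC.2 l hl x hx) _ (hC.2 m hm z hz) h).1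
  rw [← ray_smul hl x]
  exact ray_eq_of_mem hlx (smul_ne_zero hl.ne' hx0)

lemma IsExtremalRay.ray_eq_of_lt_of_lt {q d : V} {c₁ c₂ c₃ : ℝ}
    (hR : IsExtremalRay C (ray (q + c₂ • d))) (hC : IsConvexCone C) (h₁₂ : c₁ < c₂) (h₂₃ : c₂ < c₃)
    (h₁ : q + c₁ • d ∈ C) (h₃ : q + c₃ • d ∈ C) (h₁0 : q + c₁ • d ≠ 0) (h₃0 : q + c₃ • d ≠ 0) :
    ray (q + c₁ • d) = ray (q + c₂ • d) ∧ ray (q + c₃ • d) = ray (q + c₂ • d) := by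
  have hc : c₃ - c₁ ≠ 0 := by linarith
  set l := (c₃ - c₂) / (c₃ - c₁)
  set m := (c₂ - c₁) / (c₃ - c₁)
  have hl : 0 < l := div_pos (by linarith) (by linarith)
  have hm : 0 < m := div_pos (by linarith) (by linarith)
  have hcomb : l • (q + c₁ • d) + m • (q + c₃ • d) = q + c₂ • d := by
    have hlm : l + m = 1 := by simp only [l, m]; field_simp; ring
    have hlmc : l * c₁ + m * c₃ = c₂ := by simp only [l, m]; field_simp; ring
    calc l • (q + c₁ • d) + m • (q + c₃ • d) = (l + m) • q + (l * c₁ + m * c₃) • d := by module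
      _ = q + c₂ • d := by rw [hlm, hlmc, one_smul]
  refine ⟨hR.eq_ray_of_smul_add_smul_mem hC h₁ h₃ h₁0 hl hm ?_,
    hR.eq_ray_of_smul_add_smul_mem hC h₃ h₁ h₃0 hm hl ?_⟩
  · rw [hcomb]; exact self_mem_ray _
  · rw [add_comm (m • _), hcomb]; exact self_mem_ray _

lemma encard_isExtremalRay_ray_add_smul_le_two (hC : IsConvexCone C) {ψ : V →ₗ[ℝ] ℝ}
    {q d : V} (hq : ψ q ≠ 0) (hd : ψ d = 0) :
    {R | IsExtremalRay C R ∧ ∃ c : ℝ, R = ray (q + c • d)}.encard ≤ 2 := by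
  have hne : ∀ c : ℝ, q + c • d ≠ 0 := fun c h => hq (by simpa [hd] using congrArg ψ h)
  have hsub : {R | IsExtremalRay C R ∧ ∃ c : ℝ, R = ray (q + c • d)} ⊆
      (fun c : ℝ => ray (q + c • d)) '' {c | IsExtremalRay C (ray (q + c • d))} := by
    rintro R ⟨hR, c, rfl⟩
    exact ⟨c, hR, rfl⟩
  refine (Set.encard_le_encard hsub).trans
    (Set.encard_image_le_two_of_eq_of_lt_of_lt fun x hx y hy z hz hxy hyz => ?_)
  obtain ⟨hxy', hzy⟩ := hy.ray_eq_of_lt_of_lt hC hxy hyz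
    (hx.2.1 (self_mem_ray _)) (hz.2.1 (self_mem_ray _)) (hne x) (hne z)
  exact ⟨hxy', hzy.symm⟩

def ratioRays (C : Set V) (φ₁ : V →ₗ[ℝ] ℝ) {ι : Type*} (φ : ι → V →ₗ[ℝ] ℝ) (a : ι → ℝ) :
    Set (Set V) :=
  {R | IsExtremalRay C R ∧ (∀ x ∈ R, x ≠ 0 → 0 < φ₁ x) ∧ ∀ j, ∀ x ∈ R, φ j x = a j * φ₁ x}

variable {φ₁ : V →ₗ[ℝ] ℝ} {ι : Type*} {φ : ι → V →ₗ[ℝ] ℝ} {a : ι → ℝ}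

lemma exists_eq_ray_of_mem_ratioRays {R : Set V} (hR : R ∈ ratioRays C φ₁ φ a) :
    ∃ p, R = ray p ∧ φ₁ p = 1 ∧ ∀ j, φ j p = a j := by
  obtain ⟨⟨⟨v, -, hv0, rfl⟩, -, -⟩, hpos, hratio⟩ := hR
  have hφv : 0 < φ₁ v := hpos v (self_mem_ray v) hv0
  have hφp : φ₁ ((φ₁ v)⁻¹ • v) = 1 := by
    rw [map_smul, smul_eq_mul, inv_mul_cancel₀ hφv.ne']
  refine ⟨(φ₁ v)⁻¹ • v, (ray_smul (inv_pos.2 hφv) v).symm, hφp, fun j => ?_⟩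
  rw [hratio j _ ⟨_, (inv_pos.2 hφv).le, rfl⟩, hφp, mul_one]

lemma encard_ratioRays_le_two [FiniteDimensional ℝ V] (hC : IsConvexCone C)
    (hK : Module.finrank ℝ
      (Submodule.span ℝ (Set.range fun o : Option ι => o.elim φ₁ φ)).dualCoannihilator ≤ 1) :
    (ratioRays C φ₁ φ a).encard ≤ 2 := by
  set K := (Submodule.span ℝ (Set.range fun o : Option ι => o.elim φ₁ φ)).dualCoannihilator
  obtain hempty | ⟨R₀, hR₀⟩ := (ratioRays C φ₁ φ a).eq_empty_or_nonempty
  · simp [hempty]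
  obtain ⟨q, -, hq₁, hq⟩ := exists_eq_ray_of_mem_ratioRays hR₀
  obtain ⟨⟨d, hdK⟩, hd⟩ := finrank_le_one_iff.1 hK
  have hmemK : ∀ x, x ∈ K ↔ φ₁ x = 0 ∧ ∀ j, φ j x = 0 := by
    intro x
    rw [← SetLike.mem_coe, Submodule.coe_dualCoannihilator_span]
    simp only [Set.mem_ofPred_eq, Set.forall_mem_range, Option.forall, Option.elim]
  have hline : ratioRays C φ₁ φ a ⊆ {R | IsExtremalRay C R ∧ ∃ c : ℝ, R = ray (q + c • d)} := by
    intro R hR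
    obtain ⟨p, rfl, hp₁, hp⟩ := exists_eq_ray_of_mem_ratioRays hR
    obtain ⟨c, hc⟩ := hd ⟨p - q, (hmemK _).2 ⟨by simp [hp₁, hq₁], fun j => by simp [hp, hq]⟩⟩
    refine ⟨hR.1, c, ?_⟩
    rw [show c • d = p - q from congrArg Subtype.val hc, add_sub_cancel]
  exact (Set.encard_le_encard hline).trans
    (encard_isExtremalRay_ray_add_smul_le_two hC (hq₁ ▸ one_ne_zero) ((hmemK d).1 hdK).1)

end Rays

theorem stmt_8_general {V : Type*} [AddCommGroup V] [Module ℝ V] [FiniteDimensional ℝ V]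
    (n : ℕ) (hdim : Module.finrank ℝ V = n)
    (C : Set V) (hCcone : IsConvexCone C)
    (φ₁ : V →ₗ[ℝ] ℝ) (φ : Fin (n - 2) → V →ₗ[ℝ] ℝ)
    (hindep : LinearIndependent ℝ (fun o : Option (Fin (n - 2)) => o.elim φ₁ φ))
    (A : Fin (n - 2) → Finset ℝ) :
    {R : Set V | IsExtremalRay C R ∧ (∀ x ∈ R, x ≠ 0 → 0 < φ₁ x) ∧
        ∀ j : Fin (n - 2), ∃ a ∈ A j, ∀ x ∈ R, φ j x = a * φ₁ x}.Finite ∧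
      {R : Set V | IsExtremalRay C R ∧ (∀ x ∈ R, x ≠ 0 → 0 < φ₁ x) ∧
        ∀ j : Fin (n - 2), ∃ a ∈ A j, ∀ x ∈ R, φ j x = a * φ₁ x}.ncard ≤
        2 * ∏ j : Fin (n - 2), (A j).card := by
  rw [← Set.encard_le_coe_iff_finite_ncard_le]
  have hK : Module.finrank ℝ (Submodule.span ℝ
      (Set.range fun o : Option (Fin (n - 2)) => o.elim φ₁ φ)).dualCoannihilator ≤ 1 := by
    rw [Subspace.finrank_dualCoannihilator_span_range hindep, hdim, Fintype.card_option,
      Fintype.card_fin]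
    omega
  calc _ ≤ (⋃ a ∈ Fintype.piFinset A, ratioRays C φ₁ φ a).encard := by
        refine Set.encard_le_encard fun R ⟨hR, hpos, hratio⟩ => ?_
        choose a ha hra using hratio
        exact Set.mem_iUnion₂.2 ⟨a, Fintype.mem_piFinset.2 ha, hR, hpos, hra⟩
    _ ≤ ∑ a ∈ Fintype.piFinset A, (ratioRays C φ₁ φ a).encard := Finset.set_encard_biUnion_le _ _
    _ ≤ ∑ _a ∈ Fintype.piFinset A, 2 :=
        Finset.sum_le_sum fun _ _ => encard_ratioRays_le_two hCcone hK
    _ = ↑(2 * ∏ j, (A j).card) := by simp [Fintype.card_piFinset, mul_comm]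

/-- The `n − 1` linearly independent functionals are indexed by `φ₁` together with
`φ j` for `j` ranging over `Fin (n − 2)` (playing the role of the indices `2, …, n−1`). -/
theorem stmt_8 {V : Type*} [AddCommGroup V] [Module ℝ V] [FiniteDimensional ℝ V]
    (n : ℕ) (hn : 3 ≤ n) (hdim : Module.finrank ℝ V = n)
    (C : Set V) (hCcone : IsConvexCone C) (hCsal : IsSalient C)
    (φ₁ : V →ₗ[ℝ] ℝ) (φ : Fin (n - 2) → V →ₗ[ℝ] ℝ)
    (hindep : LinearIndependent ℝ (fun o : Option (Fin (n - 2)) => o.elim φ₁ φ))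
    (A : Fin (n - 2) → Finset ℝ) :
    {R : Set V | IsExtremalRay C R ∧ (∀ x ∈ R, x ≠ 0 → 0 < φ₁ x) ∧
        ∀ j : Fin (n - 2), ∃ a ∈ A j, ∀ x ∈ R, φ j x = a * φ₁ x}.Finite ∧
      {R : Set V | IsExtremalRay C R ∧ (∀ x ∈ R, x ≠ 0 → 0 < φ₁ x) ∧
        ∀ j : Fin (n - 2), ∃ a ∈ A j, ∀ x ∈ R, φ j x = a * φ₁ x}.ncard ≤
        2 * ∏ j : Fin (n - 2), (A j).card :=
  stmt_8_general n hdim C hCcone φ₁ φ hindep A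
end
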